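/- Equivalence of boundary conditions and the defining relations of the map T_ε: let θ₁, θ₂ ∈ ℝ, μ : (0,∞) → ℝ any function, and let f₁, f₃, f₄, f₅, g₂, g₃, g₄, g₆ : ℝ × (0,∞) → ℂ be continuous. Define Ψ := Ψ₊ + Ψ₋ on Ω componentwise by: ψ_{---} = 0; ψ_{--+} = e^{−s̃/ħ}f₁(s_p+s̃, s); ψ_{-+-} = e^{−s/ħ}g₂(s_p−s, s̃); ψ_{-++} = e^{−s/ħ}g₃(s_p−s, s̃+s) + e^{−s̃/ħ}f₃(s_p+s̃, s+s̃); ψ_{+--} = e^{−s̃/ħ}g₄(s_p+s̃, s+s̃) + e^{−s/ħ}f₄(s_p−s, s̃+s); ψ_{+-+} = e^{−s/ħ}f₅(s_p−s, s̃); ψ_{++-} = e^{−s̃/ħ}g₆(s_p+s̃, s); ψ_{+++} = 0. Then Ψ satisfies the boundary conditions ψ_{(−1)(+1)ς₂}(s_p, 0, s̃) = e^{iθ₁}μ(s̃)ψ_{(+1)(−1)ς₂}(s_p, 0, s̃) for ς₂ = ±1 and all (s_p, s̃), and ψ_{(+1)ς₁(−1)}(s_p, s, 0) = e^{iθ₂}μ(s)ψ_{(−1)ς₁(+1)}(s_p,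 s, 0) for ς₁ = ±1 and all (s_p, s), if and only if for all a ∈ ℝ and b > 0: g₄(a,b) = e^{iθ₂}μ(b)f₁(a,b) − e^{−b/ħ}f₄(a−b,b); g₂(a,b) = e^{iθ₁}μ(b)(f₄(a,b) + e^{−b/ħ}g₄(a+b,b)); g₃(a,b) = e^{iθ₁}μ(b)f₅(a,b) − e^{−b/ħ}f₃(a+b,b); and g₆(a,b) = e^{iθ₂}μ(b)(f₃(a,b) + e^{−b/ħ}g₃(a−b,b)). -/
import Mathlib


open Complex

noncomputable section

/-- `e^{iθ}`. -/
def eIθ (θ : ℝ) : ℂ := Complex.exp (θ * Complex.I)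

/-- Coordinates on `Ω ⊆ ℝ³` are `(s_p, s, s̃) = (x 0, x 1, x 2)`. -/
def expc (hbar t : ℝ) : ℂ := ((Real.exp (-t / hbar) : ℝ) : ℂ)

/-- Component `ψ_{--+} = e^{−s̃/ħ}f₁(s_p+s̃, s)`. -/
def ψmmp (hbar : ℝ) (f₁ : ℝ × ℝ → ℂ) (x : Fin 3 → ℝ) : ℂ :=
  expc hbar (x 2) * f₁ (x 0 + x 2, x 1)

/-- Component `ψ_{-+-} = e^{−s/ħ}g₂(s_p−s, s̃)`. -/
def ψmpm (hbar : ℝ) (g₂ : ℝ × ℝ → ℂ) (x : Fin 3 → ℝ) : ℂ :=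
  expc hbar (x 1) * g₂ (x 0 - x 1, x 2)

/-- Component `ψ_{-++} = e^{−s/ħ}g₃(s_p−s, s̃+s) + e^{−s̃/ħ}f₃(s_p+s̃, s+s̃)`. -/
def ψmpp (hbar : ℝ) (g₃ f₃ : ℝ × ℝ → ℂ) (x : Fin 3 → ℝ) : ℂ :=
  expc hbar (x 1) * g₃ (x 0 - x 1, x 2 + x 1) + expc hbar (x 2) * f₃ (x 0 + x 2, x 1 + x 2)

/-- Component `ψ_{+--} = e^{−s̃/ħ}g₄(s_p+s̃, s+s̃) + e^{−s/ħ}f₄(s_p−s, s̃+s)`. -/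
def ψpmm (hbar : ℝ) (g₄ f₄ : ℝ × ℝ → ℂ) (x : Fin 3 → ℝ) : ℂ :=
  expc hbar (x 2) * g₄ (x 0 + x 2, x 1 + x 2) + expc hbar (x 1) * f₄ (x 0 - x 1, x 2 + x 1)

/-- Component `ψ_{+-+} = e^{−s/ħ}f₅(s_p−s, s̃)`. -/
def ψpmp (hbar : ℝ) (f₅ : ℝ × ℝ → ℂ) (x : Fin 3 → ℝ) : ℂ :=
  expc hbar (x 1) * f₅ (x 0 - x 1, x 2)

/-- Component `ψ_{++-} = e^{−s̃/ħ}g₆(s_p+s̃, s)`. -/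
def ψppm (hbar : ℝ) (g₆ : ℝ × ℝ → ℂ) (x : Fin 3 → ℝ) : ℂ :=
  expc hbar (x 2) * g₆ (x 0 + x 2, x 1)


lemma expc_zero (h : ℝ) : expc h 0 = 1 := by simp [expc]

/-- Equivalence of the boundary conditions for `Ψ = Ψ₊ + Ψ₋` and the
defining relations of the map `T_ε`. -/
theorem boundary_conditions_iff_T_relations
    (hbar : ℝ) (hhbar : 0 < hbar) (θ₁ θ₂ : ℝ) (μ : ℝ → ℝ)
    (f₁ f₃ f₄ f₅ g₂ g₃ g₄ g₆ : ℝ × ℝ → ℂ)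
    (hf₁ : ContinuousOn f₁ (Set.univ ×ˢ Set.Ioi (0 : ℝ)))
    (hf₃ : ContinuousOn f₃ (Set.univ ×ˢ Set.Ioi (0 : ℝ)))
    (hf₄ : ContinuousOn f₄ (Set.univ ×ˢ Set.Ioi (0 : ℝ)))
    (hf₅ : ContinuousOn f₅ (Set.univ ×ˢ Set.Ioi (0 : ℝ)))
    (hg₂ : ContinuousOn g₂ (Set.univ ×ˢ Set.Ioi (0 : ℝ)))
    (hg₃ : ContinuousOn g₃ (Set.univ ×ˢ Set.Ioi (0 : ℝ)))
    (hg₄ : ContinuousOn g₄ (Set.univ ×ˢ Set.Ioi (0 : ℝ)))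
    (hg₆ : ContinuousOn g₆ (Set.univ ×ˢ Set.Ioi (0 : ℝ))) :
    -- boundary conditions on `C₁ = {s = 0}` and `C₂ = {s̃ = 0}`
    ((∀ (sp : ℝ) (st : ℝ), 0 < st →
        ψmpm hbar g₂ ![sp, 0, st]
          = eIθ θ₁ * ((μ st : ℝ) : ℂ) * ψpmm hbar g₄ f₄ ![sp, 0, st]) ∧
     (∀ (sp : ℝ) (st : ℝ), 0 < st →
        ψmpp hbar g₃ f₃ ![sp, 0, st]
          = eIθ θ₁ * ((μ st : ℝ) : ℂ) * ψpmp hbar f₅ ![sp, 0, st]) ∧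
     (∀ (sp : ℝ) (s : ℝ), 0 < s →
        ψpmm hbar g₄ f₄ ![sp, s, 0]
          = eIθ θ₂ * ((μ s : ℝ) : ℂ) * ψmmp hbar f₁ ![sp, s, 0]) ∧
     (∀ (sp : ℝ) (s : ℝ), 0 < s →
        ψppm hbar g₆ ![sp, s, 0]
          = eIθ θ₂ * ((μ s : ℝ) : ℂ) * ψmpp hbar g₃ f₃ ![sp, s, 0]))
    ↔
    -- the defining relations of the map `T_ε`
    (∀ (a b : ℝ), 0 < b →
      g₄ (a, b) = eIθ θ₂ * ((μ b : ℝ) : ℂ) * f₁ (a, b) - expc hbar b * f₄ (a - b, b) ∧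
      g₂ (a, b) = eIθ θ₁ * ((μ b : ℝ) : ℂ) * (f₄ (a, b) + expc hbar b * g₄ (a + b, b)) ∧
      g₃ (a, b) = eIθ θ₁ * ((μ b : ℝ) : ℂ) * f₅ (a, b) - expc hbar b * f₃ (a + b, b) ∧
      g₆ (a, b) = eIθ θ₂ * ((μ b : ℝ) : ℂ) * (f₃ (a, b) + expc hbar b * g₃ (a - b, b))) := by

  constructor
  · rintro ⟨h1, h2, h3, h4⟩ a b hb
    have e1 := h1 a b hb
    have e2 := h2 a b hb
    have e3 := h3 a b hb
    have e4 := h4 a b hb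
    simp only [ψmpm, ψmpp, ψpmm, ψpmp, ψmmp, ψppm, Matrix.cons_val_zero,
      Matrix.cons_val_one, Matrix.head_cons, Matrix.cons_val_two, Matrix.tail_cons,
      expc_zero, one_mul, add_zero, zero_add, mul_one, sub_zero] at e1 e2 e3 e4
    refine ⟨by linear_combination e3, by linear_combination e1,
      by linear_combination e2, by linear_combination e4⟩
  · intro h
    refine ⟨fun sp t ht => ?_, fun sp t ht => ?_, fun sp t ht => ?_, fun sp t ht => ?_⟩ <;>
      obtain ⟨r1, r2, r3, r4⟩ := h sp t ht <;>
      simp only [ψmpm, ψmpp, ψpmm, ψpmp, ψmmp, ψppm, Matrix.cons_val_zero,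
        Matrix.cons_val_one, Matrix.head_cons, Matrix.cons_val_two, Matrix.tail_cons,
        expc_zero, one_mul, add_zero, zero_add, mul_one, sub_zero]
    · linear_combination r2
    · linear_combination r3
    · linear_combination r1
    · linear_combination r4
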